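/- arXiv:1411.4173 — 3 statements merged into one kernel-verified Lean document; each statement's English description precedes it below -/
import Mathlib

section
/- For any bounded real variable g : Ω → ℝ and any situation s in an imprecise probability tree: sup{M(s) : M a submartingale with limsup M(ω) ≤ g(ω) for all ω ∈ ⟦s⟧} = sup{M(s) : M a bounded-above submartingale with limsup M(ω) ≤ g(ω) for all ω ∈ ⟦s⟧}; dually, inf{M(s) : M a supermartingale with liminf M(ω) ≥ g(ω) for all ω ∈ ⟦s⟧} = inf{M(s) : M a bounded-below supermartingale with liminf M(ω) ≥ g(ω) for all ω ∈ ⟦s⟧}. -/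
open Filter Topology

namespace IP

/-- A situation of length `n`: a tuple of the first `n` states. -/
abbrev Sit (𝒳 : ℕ → Type) (n : ℕ) := (i : Fin n) → 𝒳 i

/-- A path: an infinite sequence of states. -/
abbrev Path (𝒳 : ℕ → Type) := (i : ℕ) → 𝒳 i

/-- The initial segment `ω^n` of a path. -/
def res {𝒳 : ℕ → Type} (ω : Path 𝒳) (n : ℕ) : Sit 𝒳 n := fun i => ω i

/-- The initial (empty) situation `□`. -/
def emptySit {𝒳 : ℕ → Type} : Sit 𝒳 0 := fun i => i.elim0

/-- Append a next state to a situation. -/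
def snoc {𝒳 : ℕ → Type} {n : ℕ} (s : Sit 𝒳 n) (x : 𝒳 n) : Sit 𝒳 (n + 1) := fun i =>
  if h : (i : ℕ) < n then s ⟨i, h⟩
  else cast (congrArg 𝒳 (Nat.le_antisymm (Nat.le_of_not_lt h) (Nat.lt_succ_iff.mp i.isLt))) x

/-- Truncate a situation of length `n` to its first `k` states. -/
def trunc {𝒳 : ℕ → Type} {n : ℕ} (s : Sit 𝒳 n) (k : ℕ) (h : k ≤ n) : Sit 𝒳 k :=
  fun i => s ⟨i, lt_of_lt_of_le i.isLt h⟩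

/-- A (coherent) lower expectation on a nonempty finite set. -/
def IsLE {Y : Type} [Fintype Y] [Nonempty Y] (E : (Y → ℝ) → ℝ) : Prop :=
  (∀ f : Y → ℝ, (⨅ y, f y) ≤ E f) ∧
  (∀ f g : Y → ℝ, E f + E g ≤ E (fun y => f y + g y)) ∧
  (∀ (f : Y → ℝ) (c : ℝ), 0 ≤ c → E (fun y => c * f y) = c * E f)

/-- Submartingale w.r.t. the local models `Q` of an imprecise probability tree. -/
def IsSubmartingale {𝒳 : ℕ → Type} (Q : ∀ n, Sit 𝒳 n → (𝒳 n → ℝ) → ℝ)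
    (F : ∀ n, Sit 𝒳 n → ℝ) : Prop :=
  ∀ (n : ℕ) (s : Sit 𝒳 n), 0 ≤ Q n s (fun x => F (n + 1) (snoc s x) - F n s)

/-- Supermartingale: `-F` is a submartingale. -/
def IsSupermartingale {𝒳 : ℕ → Type} (Q : ∀ n, Sit 𝒳 n → (𝒳 n → ℝ) → ℝ)
    (F : ∀ n, Sit 𝒳 n → ℝ) : Prop :=
  IsSubmartingale Q (fun n s => -F n s)

/-- A test supermartingale: nonnegative, starting at 1. -/
def IsTestSupermartingale {𝒳 : ℕ → Type} (Q : ∀ n, Sit 𝒳 n → (𝒳 n → ℝ) → ℝ)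
    (F : ∀ n, Sit 𝒳 n → ℝ) : Prop :=
  IsSupermartingale Q F ∧ (∀ n s, 0 ≤ F n s) ∧ F 0 emptySit = 1

/-- An event is strictly null if some test supermartingale converges to `+∞` on it. -/
def StrictlyNull {𝒳 : ℕ → Type} (Q : ∀ n, Sit 𝒳 n → (𝒳 n → ℝ) → ℝ)
    (A : Set (Path 𝒳)) : Prop :=
  ∃ F : ∀ n, Sit 𝒳 n → ℝ, IsTestSupermartingale Q F ∧
    ∀ ω ∈ A, Tendsto (fun n => F n (res ω n)) atTop atTop

/-- `limsup_n F(ω^n)` as an extended real. -/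
noncomputable def pathLimsup {𝒳 : ℕ → Type} (F : ∀ n, Sit 𝒳 n → ℝ) (ω : Path 𝒳) : EReal :=
  Filter.limsup (fun n => (F n (res ω n) : EReal)) atTop

/-- `liminf_n F(ω^n)` as an extended real. -/
noncomputable def pathLiminf {𝒳 : ℕ → Type} (F : ∀ n, Sit 𝒳 n → ℝ) (ω : Path 𝒳) : EReal :=
  Filter.liminf (fun n => (F n (res ω n) : EReal)) atTop

/-- A real process bounded above. -/
def BddAbv {𝒳 : ℕ → Type} (F : ∀ n, Sit 𝒳 n → ℝ) : Prop := ∃ B : ℝ, ∀ n s, F n s ≤ B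

/-- A real process bounded below. -/
def BddBlw {𝒳 : ℕ → Type} (F : ∀ n, Sit 𝒳 n → ℝ) : Prop := ∃ B : ℝ, ∀ n s, B ≤ F n s

/-- Conditional global lower expectation `E(f|s)` of an extended real variable. -/
noncomputable def lexp {𝒳 : ℕ → Type} (Q : ∀ n, Sit 𝒳 n → (𝒳 n → ℝ) → ℝ) {n : ℕ}
    (s : Sit 𝒳 n) (f : Path 𝒳 → EReal) : EReal :=
  sSup ((fun F : ∀ k, Sit 𝒳 k → ℝ => (F n s : EReal)) ''
    {F : ∀ k, Sit 𝒳 k → ℝ | IsSubmartingale Q F ∧ BddAbv F ∧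
      ∀ ω : Path 𝒳, res ω n = s → pathLimsup F ω ≤ f ω})

/-- Conditional global upper expectation `Ē(f|s)`. -/
noncomputable def uexp {𝒳 : ℕ → Type} (Q : ∀ n, Sit 𝒳 n → (𝒳 n → ℝ) → ℝ) {n : ℕ}
    (s : Sit 𝒳 n) (f : Path 𝒳 → EReal) : EReal :=
  - lexp Q s (fun ω => - f ω)

/-- The local models of a (time-homogeneous) imprecise Markov chain with initial model `E1`
and transition models `QT`. -/
def markovQ {X : Type} (E1 : (X → ℝ) → ℝ) (QT : X → (X → ℝ) → ℝ) :
    ∀ n, Sit (fun _ => X) n → (X → ℝ) → ℝ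
  | 0, _ => E1
  | n + 1, s => QT (s ⟨n, Nat.lt_succ_self n⟩)

/-- Prefix a path with a situation (fixed state space). -/
def prependX {X : Type} {n : ℕ} (s : Sit (fun _ => X) n) (ω : ℕ → X) : ℕ → X :=
  fun i => if h : i < n then s ⟨i, h⟩ else ω (i - n)

/-- Extension of a lower transition operator to extended real maps. -/
noncomputable def Text {X : Type} (T : (X → ℝ) → X → ℝ) (g : X → EReal) : X → EReal :=
  fun x => sSup ((fun h : X → ℝ => (T h x : EReal)) '' {h : X → ℝ | ∀ y, (h y : EReal) ≤ g y})

/-- The variation (semi)norm `max h - min h`. -/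
noncomputable def varnorm {X : Type} [Fintype X] [Nonempty X] (h : X → ℝ) : ℝ :=
  (⨆ x, h x) - ⨅ x, h x

/-- The (weak) coefficient of ergodicity of a lower transition operator. -/
noncomputable def coeff {X : Type} [Fintype X] [Nonempty X] (S : (X → ℝ) → X → ℝ) : ℝ :=
  sSup {v : ℝ | ∃ h : X → ℝ, (∀ x, 0 ≤ h x ∧ h x ≤ 1) ∧ v = varnorm (S h)}

/-- Extend a situation to a path, arbitrarily. -/
noncomputable def extend {𝒳 : ℕ → Type} [∀ k, Nonempty (𝒳 k)] {n : ℕ} (t : Sit 𝒳 n) :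
    Path 𝒳 :=
  fun i => if h : i < n then t ⟨i, h⟩ else Classical.arbitrary (𝒳 i)



section Aux

variable {𝒳 : ℕ → Type} [∀ n, Fintype (𝒳 n)] [∀ n, Nonempty (𝒳 n)]

lemma IsLE.zero' {Y : Type} [Fintype Y] [Nonempty Y] {E : (Y → ℝ) → ℝ} (h : IsLE E) :
    E (fun _ => 0) = 0 := by
  have := h.2.2 (fun _ => (0:ℝ)) 0 le_rfl
  simpa using this

lemma IsLE.mono' {Y : Type} [Fintype Y] [Nonempty Y] {E : (Y → ℝ) → ℝ} (h : IsLE E)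
    {f g : Y → ℝ} (hfg : ∀ y, f y ≤ g y) : E f ≤ E g := by
  have h1 := h.2.1 f (fun y => g y - f y)
  have h2 : (0:ℝ) ≤ E (fun y => g y - f y) :=
    le_trans (le_ciInf fun y => by linarith [hfg y]) (h.1 _)
  have h3 : (fun y => f y + (g y - f y)) = g := by funext y; ring
  rw [h3] at h1; linarith

lemma IsLE.exists_nonneg {Y : Type} [Fintype Y] [Nonempty Y] {E : (Y → ℝ) → ℝ} (h : IsLE E)
    {f : Y → ℝ} (hf : 0 ≤ E f) : ∃ y, 0 ≤ f y := by
  by_contra hc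
  push_neg at hc
  obtain ⟨y0, hy0⟩ := Finite.exists_max f
  have h1 := h.2.1 f (fun y => - f y)
  have heq : (fun y => f y + - f y) = (fun _ => (0:ℝ)) := by funext y; ring
  rw [heq, h.zero'] at h1
  have h2 : -f y0 ≤ E (fun y => -f y) :=
    le_trans (le_ciInf fun y => by simpa using hy0 y) (h.1 _)
  linarith [hc y0]

/-- `t` agrees with `s` on their common prefix, i.e. `t` and `s` lie on a common path. -/
def Agree {n m : ℕ} (s : Sit 𝒳 n) (t : Sit 𝒳 m) : Prop :=
  ∀ (i : ℕ) (h1 : i < m) (h2 : i < n), t ⟨i, h1⟩ = s ⟨i, h2⟩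

lemma snoc_lt {m : ℕ} (t : Sit 𝒳 m) (x : 𝒳 m) (i : Fin (m+1)) (h : (i:ℕ) < m) :
    snoc t x i = t ⟨i, h⟩ := dif_pos h

lemma agree_of_snoc {n m : ℕ} {s : Sit 𝒳 n} {t : Sit 𝒳 m} {x : 𝒳 m}
    (h : Agree s (snoc t x)) : Agree s t := by
  intro i h1 h2
  have := h i (Nat.lt_succ_of_lt h1) h2
  rwa [snoc_lt t x _ h1] at this

lemma agree_self {n : ℕ} (s : Sit 𝒳 n) : Agree s s := fun i h1 h2 => rfl

/-- Along some path starting from `t`, a submartingale is nondecreasing. -/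
lemma exists_path_limsup_ge (Q : ∀ n, Sit 𝒳 n → (𝒳 n → ℝ) → ℝ) (hQ : ∀ n s, IsLE (Q n s))
    (F : ∀ n, Sit 𝒳 n → ℝ) (hF : IsSubmartingale Q F) {m : ℕ} (t : Sit 𝒳 m) :
    ∃ ω : Path 𝒳, res ω m = t ∧ (F m t : EReal) ≤ pathLimsup F ω := by
  have step : ∀ (k : ℕ) (u : Sit 𝒳 k), ∃ x : 𝒳 k, F k u ≤ F (k+1) (snoc u x) := by
    intro k u
    obtain ⟨x, hx⟩ := (hQ k u).exists_nonneg (hF k u)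
    exact ⟨x, by linarith⟩
  choose st hst using step
  let U : (k : ℕ) → Sit 𝒳 (m + k) := fun k => Nat.rec t (fun k u => snoc u (st _ u)) k
  have hUstable : ∀ (k j : ℕ) (hkj : k ≤ j) (i : ℕ) (h : i < m + k),
      U j ⟨i, lt_of_lt_of_le h (by omega)⟩ = U k ⟨i, h⟩ := by
    intro k j hkj
    induction j, hkj using Nat.le_induction with
    | base => intro i h; rfl
    | succ j hkj ih =>
      intro i h
      have h' : i < m + j := by omega
      have e1 : U (j+1) ⟨i, by omega⟩ = U j ⟨i, h'⟩ := snoc_lt (U j) _ ⟨i, by omega⟩ h'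
      exact e1.trans (ih i h)
  let ω : Path 𝒳 := fun i => U (i + 1) ⟨i, by omega⟩
  have hres : ∀ (k i : ℕ) (h : i < m + k), ω i = U k ⟨i, h⟩ := by
    intro k i h
    rcases le_or_gt (i + 1) k with hk | hk
    · exact (hUstable (i+1) k hk i (by omega)).symm
    · exact hUstable k (i+1) hk.le i h
  have hresω : ∀ k, res ω (m + k) = U k := by
    intro k
    funext i
    exact hres k i.1 i.isLt
  have hmono : ∀ k, F m t ≤ F (m+k) (U k) := by
    intro k
    induction k with
    | zero => exact le_rfl
    | succ k ih => exact ih.trans (hst (m+k) (U k))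
  refine ⟨ω, ?_, ?_⟩
  · funext i
    have := hres 0 i.1 (by omega)
    exact this
  · have hev : ∀ n' ≥ m, (F m t : EReal) ≤ (F n' (res ω n') : EReal) := by
      intro n' hn'
      obtain ⟨k, rfl⟩ := Nat.exists_eq_add_of_le hn'
      rw [hresω k]
      exact_mod_cast hmono k
    have hconst : (F m t : EReal) = Filter.limsup (fun _ : ℕ => (F m t : EReal)) atTop :=
      (Filter.limsup_const _).symm
    rw [hconst]
    exact Filter.limsup_le_limsup (Filter.eventually_atTop.2 ⟨m, fun n' hn' => hev n' hn'⟩)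

/-- A submartingale whose limsup is bounded by `C` on paths through `s` is bounded by `C`
on the whole subtree of `s`. -/
lemma subtree_bound (Q : ∀ n, Sit 𝒳 n → (𝒳 n → ℝ) → ℝ) (hQ : ∀ n s, IsLE (Q n s))
    {g : Path 𝒳 → ℝ} {C : ℝ} (hg : ∀ ω, |g ω| ≤ C) {n : ℕ} {s : Sit 𝒳 n}
    (F : ∀ k, Sit 𝒳 k → ℝ) (hF : IsSubmartingale Q F)
    (hlim : ∀ ω : Path 𝒳, res ω n = s → pathLimsup F ω ≤ (g ω : EReal))
    {m : ℕ} (t : Sit 𝒳 m) (hnm : n ≤ m) (hagree : Agree s t) : F m t ≤ C := by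
  obtain ⟨ω, hω, hle⟩ := exists_path_limsup_ge Q hQ F hF t
  have hωs : res ω n = s := by
    funext i
    have h1 : t ⟨i.1, lt_of_lt_of_le i.isLt hnm⟩ = ω i.1 := by rw [← hω]; rfl
    have h2 := hagree i.1 (lt_of_lt_of_le i.isLt hnm) i.isLt
    show ω i.1 = s i
    rw [← h1, h2]
  have hC : (g ω : EReal) ≤ (C : EReal) := by exact_mod_cast (abs_le.1 (hg ω)).2
  have := (hle.trans (hlim ω hωs)).trans hC
  exact_mod_cast this

/-- Key construction: replace a submartingale by a bounded-above one with the same value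
at `s` and the same limsup behaviour on paths through `s`. -/
lemma exists_bddAbv (Q : ∀ n, Sit 𝒳 n → (𝒳 n → ℝ) → ℝ) (hQ : ∀ n s, IsLE (Q n s))
    {g : Path 𝒳 → ℝ} {C : ℝ} (hg : ∀ ω, |g ω| ≤ C) {n : ℕ} (s : Sit 𝒳 n)
    (F : ∀ k, Sit 𝒳 k → ℝ) (hF : IsSubmartingale Q F)
    (hlim : ∀ ω : Path 𝒳, res ω n = s → pathLimsup F ω ≤ (g ω : EReal)) :
    ∃ F' : ∀ k, Sit 𝒳 k → ℝ, IsSubmartingale Q F' ∧ BddAbv F' ∧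
      (∀ ω : Path 𝒳, res ω n = s → pathLimsup F' ω ≤ (g ω : EReal)) ∧ F' n s = F n s := by
  classical
  -- bound for the values of F at children of strict prefixes of s
  set A : ℕ → ℝ := fun m => if h : m < n then ⨆ x, F (m+1) (snoc (trunc s m h.le) x) else 0
    with hA
  set K : ℝ := C + ∑ m ∈ Finset.range n, max 0 (A m - C) with hK
  have hCK : C ≤ K := le_add_of_nonneg_right (Finset.sum_nonneg fun _ _ => le_max_left _ _)
  have hAK : ∀ m, m < n → A m ≤ K := by
    intro m hm
    have h1 : max 0 (A m - C) ≤ ∑ m' ∈ Finset.range n, max 0 (A m' - C) :=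
      Finset.single_le_sum (f := fun m' => max 0 (A m' - C)) (fun _ _ => le_max_left 0 _)
        (Finset.mem_range.2 hm)
    have h2 := le_max_right 0 (A m - C)
    rw [hK]; linarith
  set P : ℕ → ℝ := fun m => if h : m ≤ n then F m (trunc s m h) else 0 with hP
  set B : ℝ := K + ∑ m ∈ Finset.range (n+1), max 0 (P m - K) with hB
  have hKB : K ≤ B := le_add_of_nonneg_right (Finset.sum_nonneg fun _ _ => le_max_left _ _)
  have hPB : ∀ m, m < n → P m ≤ B := by
    intro m hm
    have h1 : max 0 (P m - K) ≤ ∑ m' ∈ Finset.range (n+1), max 0 (P m' - K) :=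
      Finset.single_le_sum (f := fun m' => max 0 (P m' - K)) (fun _ _ => le_max_left 0 _)
        (Finset.mem_range.2 (by omega))
    have h2 := le_max_right 0 (P m - K)
    rw [hB]; linarith
  refine ⟨fun m t => if Agree s t then F m t else K, ?_, ?_, ?_, ?_⟩
  · -- submartingale
    intro m t
    show 0 ≤ Q m t fun x => (if Agree s (snoc t x) then F (m+1) (snoc t x) else K)
      - (if Agree s t then F m t else K)
    by_cases hag : Agree s t
    · rcases le_or_gt n m with hmn | hmn
      · have hch : ∀ x, Agree s (snoc t x) := by
          intro x i h1 h2
          rw [snoc_lt t x ⟨i, h1⟩ (lt_of_lt_of_le h2 hmn)]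
          exact hag i _ h2
        have heq : (fun x => (if Agree s (snoc t x) then F (m+1) (snoc t x) else K)
            - (if Agree s t then F m t else K)) = fun x => F (m+1) (snoc t x) - F m t := by
          funext x; rw [if_pos (hch x), if_pos hag]
        rw [heq]
        exact hF m t
      · -- t is a strict prefix of s
        have ht : t = trunc s m hmn.le := by
          funext i
          exact hag i.1 i.isLt (lt_of_lt_of_le i.isLt hmn.le)
        refine le_trans (hF m t) ((hQ m t).mono' ?_)
        intro x
        rw [if_pos hag]
        by_cases hx : Agree s (snoc t x)
        · rw [if_pos hx]
        · rw [if_neg hx]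
          have hle : F (m+1) (snoc t x) ≤ A m := by
            have hAm : A m = ⨆ x, F (m+1) (snoc (trunc s m hmn.le) x) := dif_pos hmn
            rw [hAm, ht]
            exact le_ciSup (f := fun x => F (m+1) (snoc (trunc s m hmn.le) x))
              (Set.Finite.bddAbove (Set.finite_range _)) x
          have := hAK m hmn
          linarith
    · have hch : ∀ x, ¬ Agree s (snoc t x) := fun x hx => hag (agree_of_snoc hx)
      have heq : (fun x => (if Agree s (snoc t x) then F (m+1) (snoc t x) else K)
          - (if Agree s t then F m t else K)) = fun _ => (0:ℝ) := by
        funext x; rw [if_neg (hch x), if_neg hag]; ring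
      rw [heq]
      exact le_of_eq ((hQ m t).zero').symm
  · -- bounded above
    refine ⟨B, fun m t => ?_⟩
    show (if Agree s t then F m t else K) ≤ B
    by_cases hag : Agree s t
    · rw [if_pos hag]
      rcases le_or_gt n m with hmn | hmn
      · exact le_trans (subtree_bound Q hQ hg F hF hlim t hmn hag) (hCK.trans hKB)
      · have ht : t = trunc s m hmn.le := by
          funext i
          exact hag i.1 i.isLt (lt_of_lt_of_le i.isLt hmn.le)
        have hPm : P m = F m (trunc s m hmn.le) := dif_pos hmn.le
        rw [ht, ← hPm]
        exact hPB m hmn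
    · rw [if_neg hag]
      exact hKB
  · -- limsup condition
    intro ω hω
    have hagr : ∀ k, Agree s (res ω k) := by
      intro k i h1 h2
      exact congrFun hω ⟨i, h2⟩
    have heq : pathLimsup (fun m t => if Agree s t then F m t else K) ω = pathLimsup F ω := by
      unfold pathLimsup
      congr 1
      funext k
      show (((if Agree s (res ω k) then F k (res ω k) else K) : ℝ) : EReal) = _
      rw [if_pos (hagr k)]
    rw [heq]
    exact hlim ω hω
  · show (if Agree s s then F n s else K) = F n s
    rw [if_pos (agree_self s)]

end Aux

/-- For bounded real variables, restricting to bounded-above submartingales (resp.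
bounded-below supermartingales) does not change the global lower (resp. upper) expectation. -/
theorem bounded_above_submartingales_suffice {𝒳 : ℕ → Type}
    [∀ n, Fintype (𝒳 n)] [∀ n, Nonempty (𝒳 n)]
    (Q : ∀ n, Sit 𝒳 n → (𝒳 n → ℝ) → ℝ) (hQ : ∀ n s, IsLE (Q n s))
    (g : Path 𝒳 → ℝ) (C : ℝ) (hg : ∀ ω, |g ω| ≤ C) {n : ℕ} (s : Sit 𝒳 n) :
    (sSup ((fun F : ∀ k, Sit 𝒳 k → ℝ => (F n s : EReal)) ''
        {F : ∀ k, Sit 𝒳 k → ℝ | IsSubmartingale Q F ∧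
          ∀ ω : Path 𝒳, res ω n = s → pathLimsup F ω ≤ (g ω : EReal)})
      = sSup ((fun F : ∀ k, Sit 𝒳 k → ℝ => (F n s : EReal)) ''
        {F : ∀ k, Sit 𝒳 k → ℝ | IsSubmartingale Q F ∧ BddAbv F ∧
          ∀ ω : Path 𝒳, res ω n = s → pathLimsup F ω ≤ (g ω : EReal)}))
    ∧ (sInf ((fun F : ∀ k, Sit 𝒳 k → ℝ => (F n s : EReal)) ''
        {F : ∀ k, Sit 𝒳 k → ℝ | IsSupermartingale Q F ∧
          ∀ ω : Path 𝒳, res ω n = s → (g ω : EReal) ≤ pathLiminf F ω})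
      = sInf ((fun F : ∀ k, Sit 𝒳 k → ℝ => (F n s : EReal)) ''
        {F : ∀ k, Sit 𝒳 k → ℝ | IsSupermartingale Q F ∧ BddBlw F ∧
          ∀ ω : Path 𝒳, res ω n = s → (g ω : EReal) ≤ pathLiminf F ω})) := by
  constructor
  · -- submartingale part: the two image sets coincide
    refine congrArg sSup (Set.Subset.antisymm ?_ ?_)
    · rintro x ⟨F, ⟨hF, hlim⟩, rfl⟩
      obtain ⟨F', hF', hbdd, hlim', hval⟩ := exists_bddAbv Q hQ hg s F hF hlim
      exact ⟨F', ⟨hF', hbdd, hlim'⟩, by simp only [hval]⟩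
    · rintro x ⟨F, ⟨hF, _, hlim⟩, rfl⟩
      exact ⟨F, ⟨hF, hlim⟩, rfl⟩
  · -- supermartingale part: dualize
    refine congrArg sInf (Set.Subset.antisymm ?_ ?_)
    · rintro x ⟨F, ⟨hF, hlim⟩, rfl⟩
      have hg' : ∀ ω, |(-g ω)| ≤ C := fun ω => by rw [abs_neg]; exact hg ω
      have hG : IsSubmartingale Q (fun k t => -F k t) := hF
      have hGlim : ∀ ω : Path 𝒳, res ω n = s →
          pathLimsup (fun k t => -F k t) ω ≤ ((-g ω : ℝ) : EReal) := by
        intro ω hω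
        have heq : (fun k => (((-F k (res ω k) : ℝ)) : EReal))
            = - fun k => ((F k (res ω k) : ℝ) : EReal) := by
          funext k; simp [EReal.coe_neg]
        unfold pathLimsup
        rw [heq, EReal.limsup_neg, EReal.coe_neg, EReal.neg_le_neg_iff]
        exact hlim ω hω
      obtain ⟨G', hG', hbdd, hlim', hval⟩ :=
        exists_bddAbv Q hQ hg' s (fun k t => -F k t) hG hGlim
      obtain ⟨B, hB⟩ := hbdd
      refine ⟨fun k t => -G' k t, ⟨?_, ⟨-B, fun k t => neg_le_neg (hB k t)⟩, ?_⟩, ?_⟩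
      · show IsSubmartingale Q (fun k t => - - G' k t)
        intro m t
        simpa only [neg_neg] using hG' m t
      · intro ω hω
        have heq : (fun k => (((-G' k (res ω k) : ℝ)) : EReal))
            = - fun k => ((G' k (res ω k) : ℝ) : EReal) := by
          funext k; simp [EReal.coe_neg]
        unfold pathLiminf
        rw [heq, EReal.liminf_neg]
        have h1 := hlim' ω hω
        unfold pathLimsup at h1
        rw [show ((-g ω : ℝ) : EReal) = -((g ω : ℝ) : EReal) from EReal.coe_neg _] at h1
        rw [← EReal.neg_le_neg_iff] at h1
        simpa using h1
      · show ((-G' n s : ℝ) : EReal) = ((F n s : ℝ) : EReal)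
        have : G' n s = -F n s := hval
        rw [this, neg_neg]
    · rintro x ⟨F, ⟨hF, _, hlim⟩, rfl⟩
      exact ⟨F, ⟨hF, hlim⟩, rfl⟩

end IP
end

section
/- (Coherence properties of the global models.) In any imprecise probability tree, for any situation s, any extended real variables f, g : Ω → ℝ ∪ {−∞,+∞}, any real λ ≥ 0 and any real μ: (1) E(f|s) ≥ inf{f(ω) : ω ∈ ⟦s⟧}; (2) E(f+g|s) ≥ E(f|s) + E(g|s); (3) E(λf|s) = λ E(f|s); (4) if the event {ω ∈ ⟦s⟧ : f(ω) > g(ω)} is strictly null, then E(f|s) ≤ E(g|s) and Ē(f|s) ≤ Ē(g|s); (5) inf{f(ω) : ω ∈ ⟦s⟧} ≤ E(f|s) ≤ Ē(f|s) ≤ sup{f(ω) : ω ∈ ⟦s⟧}; (6) E(f+μ|s) = E(f|s) + μ and Ē(f+μ|s) = Ē(f|s) + μ. -/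
open Filter Topology

namespace IP

/-!
The global lower expectation `E(f|s)` is a supremum over bounded-above submartingales whose
limsup is dominated by `f` on `⟦s⟧`. Constants are such submartingales, and the class is closed
under sums and under the affine maps `M ↦ cM + m` with `c > 0`, which act as order automorphisms
of `EReal` on values and on limsups; this gives the lower bound by `inf f`, superadditivity,
homogeneity and constant additivity. For the upper bound by `sup f`, a local lower expectation
never exceeds the maximum, so a submartingale has in every situation a successor where it does not
decrease; following such successors from `s` gives a path in `⟦s⟧` along which the limsup
dominates the value at `s`. For monotonicity, if a test supermartingale `T` tends to `+∞` where
`g < f`, then `M - εT` is admissible for `g` whenever `M` is admissible for `f`, and `ε → 0`.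
-/

section LocalModels

variable {Y : Type} [Fintype Y] [Nonempty Y] {E : (Y → ℝ) → ℝ}

lemma IsLE.apply_zero (hE : IsLE E) : E (fun _ => 0) = 0 := by
  simpa using hE.2.2 (fun _ => 0) 0 le_rfl

lemma IsLE.exists_le_apply (hE : IsLE E) (f : Y → ℝ) : ∃ y, E f ≤ f y := by
  obtain ⟨y, hy⟩ := Finite.exists_max f
  refine ⟨y, ?_⟩
  have hsum : E f + E (fun z => -f z) ≤ 0 := by
    simpa [hE.apply_zero] using hE.2.1 f (fun z => -f z)
  have hneg : -f y ≤ E (fun z => -f z) :=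
    (le_ciInf fun z => neg_le_neg (hy z)).trans (hE.1 _)
  linarith

end LocalModels

section Paths

variable {𝒳 : ℕ → Type}

lemma res_succ (ω : Path 𝒳) (k : ℕ) : res ω (k + 1) = snoc (res ω k) (ω k) := by
  funext ⟨i, hi⟩
  simp only [res, snoc]
  split_ifs with h
  · rfl
  · obtain rfl : i = k := by omega
    rfl

def followPath (next : ∀ k, Sit 𝒳 k → 𝒳 k) {n : ℕ} (s : Sit 𝒳 n) : Path 𝒳
  | i => if h : i < n then s ⟨i, h⟩ else next i fun j => followPath next s j
termination_by i => i
decreasing_by exact j.isLt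

variable (next : ∀ k, Sit 𝒳 k → 𝒳 k) {n : ℕ} (s : Sit 𝒳 n)

lemma res_followPath : res (followPath next s) n = s := by
  funext i
  rw [res, followPath, dif_pos i.isLt]

lemma followPath_of_le {k : ℕ} (hk : n ≤ k) :
    followPath next s k = next k (res (followPath next s) k) := by
  rw [followPath, dif_neg (by omega)]
  rfl

end Paths

section Processes

variable {𝒳 : ℕ → Type} {F G : ∀ k, Sit 𝒳 k → ℝ}

lemma pathLimsup_const (r : ℝ) (ω : Path 𝒳) : pathLimsup (fun _ _ => r) ω = r :=
  limsup_const _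

lemma pathLimsup_mono (h : ∀ k t, F k t ≤ G k t) (ω : Path 𝒳) :
    pathLimsup F ω ≤ pathLimsup G ω :=
  limsup_le_limsup (Eventually.of_forall fun _ => EReal.coe_le_coe_iff.mpr (h _ _))

lemma coe_le_pathLimsup {r : ℝ} {ω : Path 𝒳} (h : ∀ᶠ k in atTop, r ≤ F k (res ω k)) :
    (r : EReal) ≤ pathLimsup F ω :=
  le_limsup_of_frequently_le (h.mono fun _ hk => EReal.coe_le_coe_iff.mpr hk).frequently

lemma BddAbv.pathLimsup_ne_top (hF : BddAbv F) (ω : Path 𝒳) : pathLimsup F ω ≠ ⊤ := by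
  obtain ⟨B, hB⟩ := hF
  exact ((pathLimsup_mono hB ω).trans_eq (pathLimsup_const B ω)).trans_lt
    (EReal.coe_lt_top B) |>.ne

lemma BddAbv.add (hF : BddAbv F) (hG : BddAbv G) : BddAbv fun k t => F k t + G k t := by
  obtain ⟨B, hB⟩ := hF
  obtain ⟨C, hC⟩ := hG
  exact ⟨B + C, fun k t => add_le_add (hB k t) (hC k t)⟩

lemma BddAbv.affine (hF : BddAbv F) {c : ℝ} (hc : 0 ≤ c) (m : ℝ) :
    BddAbv fun k t => c * F k t + m := by
  obtain ⟨B, hB⟩ := hF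
  exact ⟨c * B + m, fun k t => add_le_add_left (mul_le_mul_of_nonneg_left (hB k t) hc) m⟩

lemma pathLimsup_add_le (hF : BddAbv F) (hG : BddAbv G) (ω : Path 𝒳) :
    pathLimsup (fun k t => F k t + G k t) ω ≤ pathLimsup F ω + pathLimsup G ω := by
  simp only [pathLimsup, EReal.coe_add]
  exact EReal.limsup_add_le (.inr (hG.pathLimsup_ne_top ω)) (.inl (hF.pathLimsup_ne_top ω))

lemma pathLimsup_eq_bot_of_tendsto {B ε : ℝ} (hF : ∀ k t, F k t ≤ B) (hε : 0 < ε) {ω : Path 𝒳}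
    (hG : Tendsto (fun k => G k (res ω k)) atTop atTop) :
    pathLimsup (fun k t => F k t + ε * -G k t) ω = ⊥ := by
  have hbot : Tendsto (fun k => F k (res ω k) + ε * -G k (res ω k)) atTop atBot := by
    simp only [mul_neg]
    exact tendsto_atBot_add_left_of_ge _ B (fun k => hF k _)
      (tendsto_neg_atTop_atBot.comp (hG.const_mul_atTop hε))
  exact (EReal.tendsto_coe_nhds_bot_iff.mpr hbot).limsup_eq

end Processes

noncomputable def affineOrderIso {c : ℝ} (hc : 0 < c) (m : ℝ) : EReal ≃o EReal :=
  Equiv.toOrderIso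
    { toFun := fun x => c * x + m
      invFun := fun y => (c⁻¹ : ℝ) * (y - m)
      left_inv := fun x => by
        simp only [EReal.add_sub_cancel_right, ← mul_assoc, ← EReal.coe_mul,
          inv_mul_cancel₀ hc.ne', EReal.coe_one, one_mul]
      right_inv := fun y => by
        simp only [← mul_assoc, ← EReal.coe_mul, mul_inv_cancel₀ hc.ne', EReal.coe_one, one_mul,
          EReal.sub_add_cancel] }
    (fun _ _ h => add_le_add_left (mul_le_mul_of_nonneg_left h (EReal.coe_nonneg.mpr hc.le)) _)
    (fun _ _ h => mul_le_mul_of_nonneg_left (EReal.sub_le_sub h le_rfl)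
      (EReal.coe_nonneg.mpr (inv_pos.mpr hc).le))

section Affine

variable {c : ℝ} (hc : 0 < c) (m : ℝ)

@[simp]
lemma affineOrderIso_apply (x : EReal) : affineOrderIso hc m x = c * x + m := rfl

lemma affineOrderIso_symm_apply (y : EReal) :
    (affineOrderIso hc m).symm y = affineOrderIso (inv_pos.mpr hc) (-(c⁻¹ * m)) y := by
  change ((c⁻¹ : ℝ) : EReal) * (y - m) = c⁻¹ * y + ((-(c⁻¹ * m) : ℝ) : EReal)
  rw [sub_eq_add_neg, EReal.left_distrib_of_nonneg_of_ne_top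
    (EReal.coe_nonneg.mpr (inv_pos.mpr hc).le) (EReal.coe_ne_top _), ← EReal.coe_neg, ← EReal.coe_mul, mul_neg]

lemma pathLimsup_affine {𝒳 : ℕ → Type} (F : ∀ k, Sit 𝒳 k → ℝ) (ω : Path 𝒳) :
    pathLimsup (fun k t => c * F k t + m) ω = affineOrderIso hc m (pathLimsup F ω) := by
  rw [pathLimsup, pathLimsup, OrderIso.limsup_apply]
  simp only [affineOrderIso_apply, EReal.coe_add, EReal.coe_mul]

end Affine

section Submartingales

variable {𝒳 : ℕ → Type} {Q : ∀ n, Sit 𝒳 n → (𝒳 n → ℝ) → ℝ} {F G : ∀ k, Sit 𝒳 k → ℝ}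

lemma IsSubmartingale.add_const (hF : IsSubmartingale Q F) (m : ℝ) :
    IsSubmartingale Q fun k t => F k t + m := fun k t => by
  simpa only [add_sub_add_right_eq_sub] using hF k t

variable [∀ k, Fintype (𝒳 k)] [∀ k, Nonempty (𝒳 k)]

lemma isSubmartingale_const (hQ : ∀ n s, IsLE (Q n s)) (r : ℝ) :
    IsSubmartingale Q fun _ _ => r := fun k t => by
  simp only [sub_self, (hQ k t).apply_zero, le_refl]

lemma IsSubmartingale.add (hQ : ∀ n s, IsLE (Q n s)) (hF : IsSubmartingale Q F)
    (hG : IsSubmartingale Q G) :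
    IsSubmartingale Q fun k t => F k t + G k t := fun k t =>
  calc 0 ≤ Q k t (fun x => F (k + 1) (snoc t x) - F k t)
        + Q k t (fun x => G (k + 1) (snoc t x) - G k t) := add_nonneg (hF k t) (hG k t)
    _ ≤ Q k t (fun x => F (k + 1) (snoc t x) - F k t + (G (k + 1) (snoc t x) - G k t)) :=
        (hQ k t).2.1 _ _
    _ = Q k t (fun x => F (k + 1) (snoc t x) + G (k + 1) (snoc t x) - (F k t + G k t)) := by
        simp only [add_sub_add_comm]

lemma IsSubmartingale.const_mul (hQ : ∀ n s, IsLE (Q n s)) (hF : IsSubmartingale Q F) {c : ℝ}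
    (hc : 0 ≤ c) :
    IsSubmartingale Q fun k t => c * F k t := fun k t => by
  simp only [← mul_sub, (hQ k t).2.2 _ c hc]
  exact mul_nonneg hc (hF k t)

lemma IsSubmartingale.exists_path (hQ : ∀ n s, IsLE (Q n s)) (hF : IsSubmartingale Q F) {n : ℕ}
    (s : Sit 𝒳 n) :
    ∃ ω : Path 𝒳, res ω n = s ∧ ∀ m ≥ n, F n s ≤ F m (res ω m) := by
  have hstep : ∀ k (t : Sit 𝒳 k), ∃ x, F k t ≤ F (k + 1) (snoc t x) := fun k t => by
    obtain ⟨x, hx⟩ := (hQ k t).exists_le_apply fun x => F (k + 1) (snoc t x) - F k t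
    exact ⟨x, by linarith [hF k t]⟩
  choose next hnext using hstep
  refine ⟨followPath next s, res_followPath next s, fun m hm => ?_⟩
  induction m, hm using Nat.le_induction with
  | base => rw [res_followPath]
  | succ m hm ih =>
    rw [res_succ, followPath_of_le next s hm]
    exact ih.trans (hnext m _)

end Submartingales

section GlobalExpectations

variable {𝒳 : ℕ → Type} {Q : ∀ n, Sit 𝒳 n → (𝒳 n → ℝ) → ℝ} {F : ∀ k, Sit 𝒳 k → ℝ}
  {n : ℕ} {s : Sit 𝒳 n} {f g : Path 𝒳 → EReal}

lemma le_lexp (hF : IsSubmartingale Q F) (hB : BddAbv F)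
    (hlim : ∀ ω, res ω n = s → pathLimsup F ω ≤ f ω) : (F n s : EReal) ≤ lexp Q s f :=
  le_sSup ⟨F, ⟨hF, hB, hlim⟩, rfl⟩

lemma lexp_le {a : EReal} (h : ∀ F : ∀ k, Sit 𝒳 k → ℝ, IsSubmartingale Q F → BddAbv F →
      (∀ ω, res ω n = s → pathLimsup F ω ≤ f ω) → (F n s : EReal) ≤ a) :
    lexp Q s f ≤ a :=
  sSup_le <| by
    rintro _ ⟨F, ⟨hF, hB, hlim⟩, rfl⟩
    exact h F hF hB hlim

variable [∀ k, Fintype (𝒳 k)] [∀ k, Nonempty (𝒳 k)]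

lemma coe_le_lexp (hQ : ∀ n s, IsLE (Q n s)) {r : ℝ} (hr : ∀ ω, res ω n = s → (r : EReal) ≤ f ω) :
    (r : EReal) ≤ lexp Q s f :=
  le_lexp (isSubmartingale_const hQ r) ⟨r, fun _ _ => le_rfl⟩
    fun ω hω => (pathLimsup_const r ω).trans_le (hr ω hω)

lemma iInf_le_lexp (hQ : ∀ n s, IsLE (Q n s)) (s : Sit 𝒳 n) (f : Path 𝒳 → EReal) :
    ⨅ ω ∈ {ω : Path 𝒳 | res ω n = s}, f ω ≤ lexp Q s f := by
  refine le_of_forall_lt fun c hc => ?_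
  obtain ⟨r, hcr, hr⟩ := EReal.exists_between_coe_real hc
  exact hcr.trans_le (coe_le_lexp hQ fun ω hω => hr.le.trans (iInf₂_le ω hω))

lemma lexp_le_iSup (hQ : ∀ n s, IsLE (Q n s)) (s : Sit 𝒳 n) (f : Path 𝒳 → EReal) :
    lexp Q s f ≤ ⨆ ω ∈ {ω : Path 𝒳 | res ω n = s}, f ω :=
  lexp_le fun F hF _ hlim => by
    obtain ⟨ω, hω, hmono⟩ := hF.exists_path hQ s
    calc (F n s : EReal) ≤ pathLimsup F ω := coe_le_pathLimsup (eventually_atTop.mpr ⟨n, hmono⟩)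
      _ ≤ f ω := hlim ω hω
      _ ≤ ⨆ ω ∈ {ω : Path 𝒳 | res ω n = s}, f ω :=
        le_iSup₂ (f := fun ω (_ : ω ∈ {ω : Path 𝒳 | res ω n = s}) => f ω) ω hω

lemma lexp_const_zero (hQ : ∀ n s, IsLE (Q n s)) (s : Sit 𝒳 n) :
    lexp Q s (fun _ => 0) = 0 :=
  le_antisymm ((lexp_le_iSup hQ s _).trans (iSup₂_le fun _ _ => le_rfl))
    (by exact_mod_cast coe_le_lexp (r := 0) hQ fun _ _ => le_rfl)

lemma lexp_add_le (hQ : ∀ n s, IsLE (Q n s)) (s : Sit 𝒳 n) (f g : Path 𝒳 → EReal) :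
    lexp Q s f + lexp Q s g ≤ lexp Q s (fun ω => f ω + g ω) := by
  refine EReal.add_le_of_forall_lt fun a ha b hb => ?_
  obtain ⟨_, ⟨F, ⟨hF, hFB, hFlim⟩, rfl⟩, haF⟩ := lt_sSup_iff.mp ha
  obtain ⟨_, ⟨G, ⟨hG, hGB, hGlim⟩, rfl⟩, hbG⟩ := lt_sSup_iff.mp hb
  calc a + b ≤ (F n s : EReal) + G n s := add_le_add haF.le hbG.le
    _ = ((F n s + G n s : ℝ) : EReal) := (EReal.coe_add _ _).symm
    _ ≤ lexp Q s (fun ω => f ω + g ω) :=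
      le_lexp (hF.add hQ hG) (hFB.add hGB) fun ω hω =>
        (pathLimsup_add_le hFB hGB ω).trans (add_le_add (hFlim ω hω) (hGlim ω hω))

lemma le_lexp_affine (hQ : ∀ n s, IsLE (Q n s)) (s : Sit 𝒳 n) (f : Path 𝒳 → EReal) {c : ℝ}
    (hc : 0 < c) (m : ℝ) :
    affineOrderIso hc m (lexp Q s f) ≤ lexp Q s (fun ω => affineOrderIso hc m (f ω)) := by
  rw [lexp, OrderIso.map_sSup]
  refine iSup₂_le ?_
  rintro _ ⟨F, ⟨hF, hB, hlim⟩, rfl⟩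
  have := le_lexp ((hF.const_mul hQ hc.le).add_const m) (hB.affine hc.le m)
    (f := fun ω => affineOrderIso hc m (f ω)) fun ω hω => by
      rw [pathLimsup_affine]
      exact (affineOrderIso hc m).monotone (hlim ω hω)
  simpa only [affineOrderIso_apply, EReal.coe_add, EReal.coe_mul] using this

lemma lexp_affine (hQ : ∀ n s, IsLE (Q n s)) (s : Sit 𝒳 n) (f : Path 𝒳 → EReal) {c : ℝ}
    (hc : 0 < c) (m : ℝ) :
    lexp Q s (fun ω => affineOrderIso hc m (f ω)) = affineOrderIso hc m (lexp Q s f) := by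
  refine le_antisymm ?_ (le_lexp_affine hQ s f hc m)
  have hinv :=
    le_lexp_affine hQ s (fun ω => affineOrderIso hc m (f ω)) (inv_pos.mpr hc) (-(c⁻¹ * m))
  simp only [← affineOrderIso_symm_apply hc m, OrderIso.symm_apply_apply] at hinv
  simpa only [OrderIso.apply_symm_apply] using (affineOrderIso hc m).monotone hinv

lemma lexp_const_mul (hQ : ∀ n s, IsLE (Q n s)) (s : Sit 𝒳 n) (f : Path 𝒳 → EReal) {c : ℝ}
    (hc : 0 ≤ c) : lexp Q s (fun ω => c * f ω) = c * lexp Q s f := by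
  rcases hc.eq_or_lt with rfl | hc
  · simpa only [EReal.coe_zero, zero_mul] using lexp_const_zero hQ s
  · simpa only [affineOrderIso_apply, EReal.coe_zero, add_zero] using lexp_affine hQ s f hc 0

lemma lexp_add_const (hQ : ∀ n s, IsLE (Q n s)) (s : Sit 𝒳 n) (f : Path 𝒳 → EReal) (m : ℝ) :
    lexp Q s (fun ω => f ω + m) = lexp Q s f + m := by
  simpa only [affineOrderIso_apply, EReal.coe_one, one_mul] using lexp_affine hQ s f one_pos m

lemma lexp_le_of_strictlyNull (hQ : ∀ n s, IsLE (Q n s))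
    (hN : StrictlyNull Q {ω | res ω n = s ∧ g ω < f ω}) : lexp Q s f ≤ lexp Q s g := by
  obtain ⟨T, ⟨hT, hT_nonneg, -⟩, hTtop⟩ := hN
  refine lexp_le fun M hM ⟨B, hB⟩ hMlim => ?_
  have hpen : ∀ ε > 0, ((M n s + ε * -T n s : ℝ) : EReal) ≤ lexp Q s g := fun ε hε => by
    have hle : ∀ k t, M k t + ε * -T k t ≤ M k t := fun k t => by nlinarith [hT_nonneg k t]
    refine le_lexp (hM.add hQ (IsSubmartingale.const_mul hQ hT hε.le))
      ⟨B, fun k t => (hle k t).trans (hB k t)⟩ fun ω hω => ?_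
    by_cases hgf : g ω < f ω
    · rw [pathLimsup_eq_bot_of_tendsto hB hε (hTtop ω ⟨hω, hgf⟩)]
      exact bot_le
    · exact (pathLimsup_mono hle ω).trans ((hMlim ω hω).trans (not_lt.mp hgf))
  have hlim : Tendsto (fun ε : ℝ => M n s + ε * -T n s) (𝓝[>] 0) (𝓝 (M n s)) :=
    ((by fun_prop : Continuous fun ε : ℝ => M n s + ε * -T n s).tendsto' 0 _
      (by simp)).mono_left nhdsWithin_le_nhds
  exact le_of_tendsto ((continuous_coe_real_ereal.tendsto _).comp hlim)
    (eventually_nhdsWithin_of_forall hpen)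

lemma lexp_le_uexp (hQ : ∀ n s, IsLE (Q n s)) (s : Sit 𝒳 n) (f : Path 𝒳 → EReal) :
    lexp Q s f ≤ uexp Q s f := by
  have hsum : lexp Q s f + lexp Q s (fun ω => -f ω) ≤ 0 :=
    (lexp_add_le hQ s _ _).trans
      ((lexp_le_iSup hQ s _).trans (iSup₂_le fun ω _ => EReal.sub_self_le_zero))
  rw [uexp, ← zero_sub]
  exact (EReal.le_sub_iff_add_le (.inr EReal.zero_ne_bot) (.inr EReal.zero_ne_top)).mpr hsum

lemma uexp_le_iSup (hQ : ∀ n s, IsLE (Q n s)) (s : Sit 𝒳 n) (f : Path 𝒳 → EReal) :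
    uexp Q s f ≤ ⨆ ω ∈ {ω : Path 𝒳 | res ω n = s}, f ω := by
  refine EReal.neg_le_of_neg_le ((le_iInf₂ fun ω hω => ?_).trans (iInf_le_lexp hQ s _))
  exact EReal.neg_le_neg_iff.mpr
    (le_iSup₂ (f := fun ω (_ : ω ∈ {ω : Path 𝒳 | res ω n = s}) => f ω) ω hω)

lemma uexp_le_of_strictlyNull (hQ : ∀ n s, IsLE (Q n s))
    (hN : StrictlyNull Q {ω | res ω n = s ∧ g ω < f ω}) : uexp Q s f ≤ uexp Q s g := by
  rw [uexp, uexp, EReal.neg_le_neg_iff]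
  refine lexp_le_of_strictlyNull hQ ?_
  simpa only [EReal.neg_lt_neg_iff] using hN

lemma uexp_add_const (hQ : ∀ n s, IsLE (Q n s)) (s : Sit 𝒳 n) (f : Path 𝒳 → EReal) (m : ℝ) :
    uexp Q s (fun ω => f ω + m) = uexp Q s f + m := by
  have hneg : ∀ (x : EReal) (r : ℝ), -(x + r) = -x + (-r : ℝ) := fun x r =>
    EReal.neg_add (.inr (EReal.coe_ne_top r)) (.inr (EReal.coe_ne_bot r))
  simp only [uexp, hneg, lexp_add_const hQ s (fun ω => -f ω), neg_neg]

end GlobalExpectations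

/-- Coherence properties of the global models. -/
theorem global_coherence {𝒳 : ℕ → Type} [∀ n, Fintype (𝒳 n)] [∀ n, Nonempty (𝒳 n)]
    (Q : ∀ n, Sit 𝒳 n → (𝒳 n → ℝ) → ℝ) (hQ : ∀ n s, IsLE (Q n s))
    {n : ℕ} (s : Sit 𝒳 n) (f g : Path 𝒳 → EReal) (lam : ℝ) (hlam : 0 ≤ lam) (mu : ℝ) :
    ((⨅ ω ∈ {ω : Path 𝒳 | res ω n = s}, f ω) ≤ lexp Q s f)
    ∧ (lexp Q s f + lexp Q s g ≤ lexp Q s (fun ω => f ω + g ω))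
    ∧ (lexp Q s (fun ω => (lam : EReal) * f ω) = (lam : EReal) * lexp Q s f)
    ∧ (StrictlyNull Q {ω : Path 𝒳 | res ω n = s ∧ g ω < f ω} →
        lexp Q s f ≤ lexp Q s g ∧ uexp Q s f ≤ uexp Q s g)
    ∧ ((⨅ ω ∈ {ω : Path 𝒳 | res ω n = s}, f ω) ≤ lexp Q s f
        ∧ lexp Q s f ≤ uexp Q s f
        ∧ uexp Q s f ≤ ⨆ ω ∈ {ω : Path 𝒳 | res ω n = s}, f ω)
    ∧ (lexp Q s (fun ω => f ω + (mu : EReal)) = lexp Q s f + (mu : EReal)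
        ∧ uexp Q s (fun ω => f ω + (mu : EReal)) = uexp Q s f + (mu : EReal)) :=
  ⟨iInf_le_lexp hQ s f, lexp_add_le hQ s f g, lexp_const_mul hQ s f hlam,
    fun hN => ⟨lexp_le_of_strictlyNull hQ hN, uexp_le_of_strictlyNull hQ hN⟩,
    ⟨iInf_le_lexp hQ s f, lexp_le_uexp hQ s f, uexp_le_iSup hQ s f⟩,
    lexp_add_const hQ s f mu, uexp_add_const hQ s f mu⟩

end IP
end

section
/- Consider an imprecise Markov chain with lower transition operator T (extended to extended real maps as described). Let n ∈ ℕ and k ∈ ℕ ∪ {0}, and let g be an extended real variable that does not depend on the first n+k−1 states, i.e., g(sω) = g(tω) for all situations s, t of length n+k−1 and all ω ∈ Ω, where sω denotes the path obtained by prefixing ω with s. Then for every x ∈ 𝒳, every situation s of length n−1 and every situation t of length n+k−1: E(g | sx) = (T^k h)(x), where h is the extended real map on 𝒳 defined by h(y) := E(g | ty). -/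
open Filter Topology

namespace IP

namespace Aux

/-! ### Lower expectation basics -/

variable {Y : Type} [Fintype Y] [Nonempty Y] {E : (Y → ℝ) → ℝ}

theorem isle_zero (hE : IsLE E) : E (fun _ => 0) = 0 := by
  have := hE.2.2 (fun _ => (0:ℝ)) 0 le_rfl
  simpa using this

theorem isle_const (hE : IsLE E) (c : ℝ) : E (fun _ => c) = c := by
  have h1 : c ≤ E (fun _ => c) := by
    have := hE.1 (fun _ => c); simpa using this
  have h2 : -c ≤ E (fun _ => -c) := by
    have := hE.1 (fun _ => -c); simpa using this
  have h3 := hE.2.1 (fun _ => c) (fun _ => -c)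
  rw [show (fun _ : Y => c + -c) = (fun _ : Y => (0:ℝ)) by funext; ring, isle_zero hE] at h3
  linarith

theorem isle_mono (hE : IsLE E) {f g : Y → ℝ} (h : ∀ y, f y ≤ g y) : E f ≤ E g := by
  have h1 : (0:ℝ) ≤ E (fun y => g y - f y) := by
    refine le_trans ?_ (hE.1 _)
    exact le_ciInf fun y => by linarith [h y]
  have h2 := hE.2.1 f (fun y => g y - f y)
  rw [show (fun y => f y + (g y - f y)) = g by funext; ring] at h2
  linarith

theorem isle_add_const (hE : IsLE E) (f : Y → ℝ) (c : ℝ) :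
    E (fun y => f y + c) = E f + c := by
  have h1 : E f + c ≤ E (fun y => f y + c) := by
    have := hE.2.1 f (fun _ => c); rw [isle_const hE] at this; exact this
  have h2 : E (fun y => f y + c) + -c ≤ E f := by
    have := hE.2.1 (fun y => f y + c) (fun _ => -c)
    rw [isle_const hE, show (fun y => (f y + c) + -c) = f by funext; ring] at this
    exact this
  linarith

theorem isle_sub_const (hE : IsLE E) (f : Y → ℝ) (c : ℝ) :
    E (fun y => f y - c) = E f - c := by
  have := isle_add_const hE f (-c)
  simpa [sub_eq_add_neg] using this

/-! ### Coordinates of snoc / extend / prependX -/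

theorem snoc_lt {X : Type} {n : ℕ} (s : Sit (fun _ => X) n) (x : X) (i : Fin (n+1))
    (h : (i:ℕ) < n) : snoc s x i = s ⟨i, h⟩ := by
  simp [snoc, h]

theorem snoc_last' {X : Type} {n : ℕ} (s : Sit (fun _ => X) n) (x : X) (i : Fin (n+1))
    (h : ¬ (i:ℕ) < n) : snoc s x i = x := by
  unfold snoc
  rw [dif_neg h]
  exact eq_of_heq (cast_heq _ _)

theorem extend_coord {X : Type} [Nonempty X] {j : ℕ} (w : Sit (fun _ => X) j) (i : ℕ)
    (h : i < j) : extend w i = w ⟨i, h⟩ := by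
  simp [extend, h]

theorem resext_self {X : Type} [Nonempty X] {j : ℕ} (w : Sit (fun _ => X) j) :
    res (extend w) j = w := by
  funext i
  show extend w i = w i
  rw [extend_coord w i i.isLt]

theorem resext_snoc {X : Type} [Nonempty X] {j : ℕ} (w : Sit (fun _ => X) j) (y : X)
    {L : ℕ} (h : L ≤ j) : res (extend (snoc w y)) L = res (extend w) L := by
  funext i
  show extend (snoc w y) i = extend w i
  have hi : (i : ℕ) < j := lt_of_lt_of_le i.isLt h
  rw [extend_coord _ _ (by omega : (i:ℕ) < j + 1), extend_coord _ _ hi,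
    snoc_lt _ _ _ hi]

theorem extend_snoc_last {X : Type} [Nonempty X] {j : ℕ} (w : Sit (fun _ => X) j) (y : X) :
    extend (snoc w y) j = y := by
  rw [extend_coord _ _ (Nat.lt_succ_self j), snoc_last' _ _ _ (by simp)]

def consP {X : Type} (x : X) (ω : ℕ → X) : ℕ → X := fun i => if i = 0 then x else ω (i - 1)

theorem prependX_snoc {X : Type} {n : ℕ} (s : Sit (fun _ => X) n) (x : X) (ω : ℕ → X) :
    prependX (snoc s x) ω = prependX s (consP x ω) := by
  funext i
  unfold prependX consP
  rcases lt_trichotomy i n with h | h | h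
  · rw [dif_pos (by omega : i < n + 1), dif_pos h, snoc_lt _ _ _ h]
  · subst h
    rw [dif_pos (by omega : i < i + 1), dif_neg (by omega), snoc_last' _ _ _ (by simp)]
    simp
  · rw [dif_neg (by omega), dif_neg (by omega), if_neg (by omega)]
    congr 1

theorem consP_tail {X : Type} (ω : ℕ → X) : consP (ω 0) (fun i => ω (i + 1)) = ω := by
  funext i
  unfold consP
  rcases Nat.eq_zero_or_pos i with h | h
  · simp [h]
  · rw [if_neg (by omega)]
    exact congrArg ω (by omega)

theorem prependX_eq_snoc_tail {X : Type} {n : ℕ} (s : Sit (fun _ => X) n) (ω : ℕ → X) :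
    prependX s ω = prependX (snoc s (ω 0)) (fun i => ω (i + 1)) := by
  rw [prependX_snoc, consP_tail]

theorem markovQ_isLE {X : Type} [Fintype X] [Nonempty X] (E1 : (X → ℝ) → ℝ)
    (T : (X → ℝ) → X → ℝ) (hE1 : IsLE E1) (hT : ∀ x : X, IsLE (fun h => T h x))
    (n : ℕ) (s : Sit (fun _ => X) n) : IsLE (markovQ E1 (fun x h => T h x) n s) := by
  cases n with
  | zero => exact hE1
  | succ n => exact hT _

theorem resext_res {X : Type} [Nonempty X] (ω : Path (fun _ => X)) {j L : ℕ} (h : L ≤ j) :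
    res (extend (res ω j)) L = res ω L := by
  funext i
  show extend (res ω j) i = ω i
  rw [extend_coord _ _ (lt_of_lt_of_le i.isLt h)]
  rfl

theorem lexp_transplant {X : Type} [Fintype X] [Nonempty X]
    (E1 : (X → ℝ) → ℝ) (T : (X → ℝ) → X → ℝ)
    (hE1 : IsLE E1) (hT : ∀ x : X, IsLE (fun h => T h x))
    {n : ℕ} (u v : Sit (fun _ => X) (n+1))
    (hlast : u ⟨n, Nat.lt_succ_self n⟩ = v ⟨n, Nat.lt_succ_self n⟩)
    (g : Path (fun _ => X) → EReal)
    (hguv : ∀ ω : ℕ → X, g (prependX u ω) = g (prependX v ω)) :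
    lexp (markovQ E1 (fun x h => T h x)) u g ≤ lexp (markovQ E1 (fun x h => T h x)) v g := by
  classical
  haveI : ∀ k : ℕ, Nonempty ((fun _ : ℕ => X) k) := fun _ => inferInstance
  set Q := markovQ E1 (fun x h => T h x) with hQdef
  have hQle : ∀ (j : ℕ) (w : Sit (fun _ => X) j), IsLE (Q j w) :=
    markovQ_isLE E1 T hE1 hT
  refine sSup_le ?_
  rintro b ⟨F, ⟨hFsub, ⟨B, hFB⟩, hFlim⟩, rfl⟩
  set c0 : ℝ := F (n+1) u with hc0
  set G : ∀ j, Sit (fun _ => X) j → Sit (fun _ => X) j :=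
    fun j w => fun i => if h : (i:ℕ) < n+1 then u ⟨i, h⟩ else w i with hGdef
  set F' : ∀ j, Sit (fun _ => X) j → ℝ :=
    fun j w => if n+1 ≤ j ∧ res (extend w) (n+1) = v then F j (G j w) else c0 with hF'def
  have hG11 : ∀ w : Sit (fun _ => X) (n+1), G (n+1) w = u := by
    intro w; funext i
    simp only [hGdef]
    rw [dif_pos i.isLt, Fin.eta]
  have hGsnoc : ∀ (j : ℕ), n+1 ≤ j → ∀ (w : Sit (fun _ => X) j) (y : X),
      G (j+1) (snoc w y) = snoc (G j w) y := by
    intro j hj w y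
    funext i
    simp only [hGdef]
    by_cases hi : (i:ℕ) < n+1
    · rw [dif_pos hi, snoc_lt _ _ _ (by omega), dif_pos hi]
    · rw [dif_neg hi]
      by_cases hij : (i:ℕ) < j
      · rw [snoc_lt _ _ _ hij, snoc_lt _ _ _ hij, dif_neg hi]
      · rw [snoc_last' _ _ _ hij, snoc_last' _ _ _ hij]
  have hF'low : ∀ (j : ℕ), j ≤ n+1 → ∀ w : Sit (fun _ => X) j, F' j w = c0 := by
    intro j hj w
    simp only [hF'def]
    by_cases hC : n+1 ≤ j ∧ res (extend w) (n+1) = v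
    · rw [if_pos hC]
      obtain ⟨hj1, hC2⟩ := hC
      have hj' : j = n+1 := le_antisymm hj hj1
      subst hj'
      rw [hG11]
    · rw [if_neg hC]
  have hF'sub : IsSubmartingale Q F' := by
    intro j w
    rcases le_or_gt (j+1) (n+1) with hj | hj
    · have hzero : (fun y => F' (j+1) (snoc w y) - F' j w) = fun _ : X => (0:ℝ) := by
        funext y
        rw [hF'low (j+1) hj, hF'low j (by omega)]
        ring
      rw [hzero, isle_zero (hQle j w)]
    · have hj' : n+1 ≤ j := by omega
      by_cases hC : res (extend w) (n+1) = v
      · have hval : F' j w = F j (G j w) := by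
          simp only [hF'def]; rw [if_pos ⟨hj', hC⟩]
        have hvalc : ∀ y, F' (j+1) (snoc w y) = F (j+1) (snoc (G j w) y) := by
          intro y
          have h1 : res (extend (snoc w y)) (n+1) = v := by
            rw [resext_snoc w y hj']; exact hC
          simp only [hF'def]
          rw [if_pos ⟨by omega, h1⟩, hGsnoc j hj' w y]
        have hgam : (fun y => F' (j+1) (snoc w y) - F' j w)
            = (fun y => F (j+1) (snoc (G j w) y) - F j (G j w)) := by
          funext y; rw [hvalc y, hval]
        obtain ⟨j', rfl⟩ : ∃ j', j = j'+1 := ⟨j-1, by omega⟩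
        have hcoord : w ⟨j', Nat.lt_succ_self j'⟩ = G (j'+1) w ⟨j', Nat.lt_succ_self j'⟩ := by
          simp only [hGdef]
          by_cases hjn : (j':ℕ) < n+1
          · have hj'' : j' = n := by omega
            subst hj''
            have hwv : w = v := by rw [← hC, resext_self]
            rw [dif_pos hjn, hwv, ← hlast]
          · rw [dif_neg hjn]
        have hQeq : Q (j'+1) w = Q (j'+1) (G (j'+1) w) := by
          simp only [hQdef, markovQ]
          rw [hcoord]
        rw [hgam, hQeq]
        exact hFsub (j'+1) (G (j'+1) w)
      · have h1 : F' j w = c0 := by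
          simp only [hF'def]; rw [if_neg (fun hc => hC hc.2)]
        have h2 : ∀ y, F' (j+1) (snoc w y) = c0 := by
          intro y
          simp only [hF'def]
          refine if_neg (fun hc => hC ?_)
          rw [← resext_snoc w y hj']
          exact hc.2
        have hzero : (fun y => F' (j+1) (snoc w y) - F' j w) = fun _ : X => (0:ℝ) := by
          funext y; rw [h1, h2 y]; ring
        rw [hzero, isle_zero (hQle j w)]
  have hF'bdd : BddAbv F' := by
    refine ⟨max B c0, fun j w => ?_⟩
    simp only [hF'def]
    by_cases hC : n+1 ≤ j ∧ res (extend w) (n+1) = v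
    · rw [if_pos hC]; exact le_max_of_le_left (hFB _ _)
    · rw [if_neg hC]; exact le_max_right _ _
  have hF'lim : ∀ ω : Path (fun _ => X), res ω (n+1) = v → pathLimsup F' ω ≤ g ω := by
    intro ω hω
    set ω' : Path (fun _ => X) := fun i => if h : i < n+1 then u ⟨i, h⟩ else ω i with hω'def
    have hres' : ∀ j, res ω' j = G j (res ω j) := by
      intro j; funext i; rfl
    have hlimeq : pathLimsup F' ω = pathLimsup F ω' := by
      unfold pathLimsup
      apply Filter.limsup_congr
      filter_upwards [eventually_ge_atTop (n+1)] with j hj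
      have hCres : res (extend (res ω j)) (n+1) = v := by
        rw [resext_res ω hj]; exact hω
      have : F' j (res ω j) = F j (res ω' j) := by
        simp only [hF'def]
        rw [if_pos ⟨hj, hCres⟩, hres']
      rw [this]
    have hres'u : res ω' (n+1) = u := by
      funext i
      show ω' i = u i
      simp only [hω'def]
      rw [dif_pos i.isLt, Fin.eta]
    have hgeq : g ω' = g ω := by
      have h1 : ω' = prependX u (fun i => ω (i + (n+1))) := by
        funext i
        simp only [hω'def, prependX]
        by_cases hi : i < n+1
        · rw [dif_pos hi, dif_pos hi]
        · rw [dif_neg hi, dif_neg hi]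
          exact (congrArg ω (by omega)).symm
      have h2 : ω = prependX v (fun i => ω (i + (n+1))) := by
        funext i
        simp only [prependX]
        by_cases hi : i < n+1
        · rw [dif_pos hi]
          exact (congrFun hω ⟨i, hi⟩ : ω i = v ⟨i, hi⟩)
        · rw [dif_neg hi]
          exact congrArg ω (by omega)
      rw [h1, hguv, ← h2]
    calc pathLimsup F' ω = pathLimsup F ω' := hlimeq
      _ ≤ g ω' := hFlim ω' hres'u
      _ = g ω := hgeq
  refine le_sSup ⟨F', ⟨hF'sub, hF'bdd, hF'lim⟩, ?_⟩
  show ((F' (n+1) v : ℝ) : EReal) = _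
  have : F' (n+1) v = F (n+1) u := by
    simp only [hF'def]
    rw [if_pos ⟨le_rfl, by rw [resext_self]⟩, hG11]
  rw [this]

theorem isle_le_of_sub {Y : Type} [Fintype Y] [Nonempty Y] {E : (Y → ℝ) → ℝ}
    (hE : IsLE E) (f : Y → ℝ) (c : ℝ) (h : 0 ≤ E (fun y => f y - c)) : c ≤ E f := by
  have := isle_sub_const hE f c
  linarith

theorem lexp_step {X : Type} [Fintype X] [Nonempty X]
    (E1 : (X → ℝ) → ℝ) (T : (X → ℝ) → X → ℝ)
    (hE1 : IsLE E1) (hT : ∀ x : X, IsLE (fun h => T h x))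
    {n : ℕ} (u : Sit (fun _ => X) (n+1)) (g : Path (fun _ => X) → EReal) :
    lexp (markovQ E1 (fun x h => T h x)) u g
      = Text T (fun z => lexp (markovQ E1 (fun x h => T h x)) (snoc u z) g)
          (u ⟨n, Nat.lt_succ_self n⟩) := by
  classical
  haveI : ∀ k : ℕ, Nonempty ((fun _ : ℕ => X) k) := fun _ => inferInstance
  set Q := markovQ E1 (fun x h => T h x) with hQdef
  have hQle : ∀ (j : ℕ) (w : Sit (fun _ => X) j), IsLE (Q j w) :=
    markovQ_isLE E1 T hE1 hT
  set xn := u ⟨n, Nat.lt_succ_self n⟩ with hxn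
  have hQu : ∀ f : X → ℝ, Q (n+1) u f = T f xn := fun f => rfl
  apply le_antisymm
  · refine sSup_le ?_
    rintro b ⟨F, ⟨hFsub, hFbdd, hFlim⟩, rfl⟩
    have hmem : ∀ z : X,
        ((F (n+1+1) (snoc u z) : ℝ) : EReal) ≤ lexp Q (snoc u z) g := by
      intro z
      refine le_sSup ⟨F, ⟨hFsub, hFbdd, ?_⟩, rfl⟩
      intro ω hω
      refine hFlim ω ?_
      funext i
      show ω (i:ℕ) = u i
      have h2 : ω (i:ℕ) = snoc u z ⟨(i:ℕ), by omega⟩ :=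
        congrFun hω ⟨(i:ℕ), by omega⟩
      exact h2.trans ((snoc_lt u z ⟨(i:ℕ), by omega⟩ i.isLt).trans
        (congrArg u (Fin.eta i i.isLt)))
    have hb : F (n+1) u ≤ T (fun z => F (n+1+1) (snoc u z)) xn := by
      refine isle_le_of_sub (hT xn) (fun z => F (n+1+1) (snoc u z)) (F (n+1) u) ?_
      have hsub := hFsub (n+1) u
      rw [hQu] at hsub
      exact hsub
    refine le_trans ?_ (le_sSup ⟨fun z => F (n+1+1) (snoc u z), hmem, rfl⟩)
    exact EReal.coe_le_coe_iff.mpr hb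
  · refine sSup_le ?_
    rintro b ⟨h', hh', rfl⟩
    by_contra hcon
    rw [not_le] at hcon
    obtain ⟨d, hd1, hd2⟩ := EReal.lt_iff_exists_real_btwn.mp hcon
    set ε : ℝ := T h' xn - d with hεdef
    have hε : 0 < ε := by
      have := EReal.coe_lt_coe_iff.mp hd2
      simp only [hεdef]
      linarith
    have hwit : ∀ z : X, ∃ F : ∀ k, Sit (fun _ => X) k → ℝ,
        (IsSubmartingale Q F ∧ BddAbv F ∧
          ∀ ω : Path (fun _ => X), res ω (n+1+1) = snoc u z → pathLimsup F ω ≤ g ω) ∧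
        h' z - ε < F (n+1+1) (snoc u z) := by
      intro z
      have h1 : ((h' z - ε : ℝ) : EReal) < lexp Q (snoc u z) g := by
        refine lt_of_lt_of_le ?_ (hh' z)
        exact_mod_cast (by linarith : h' z - ε < h' z)
      obtain ⟨a, ha, hlt⟩ := lt_sSup_iff.mp h1
      obtain ⟨F, hF, rfl⟩ := ha
      exact ⟨F, hF, EReal.coe_lt_coe_iff.mp hlt⟩
    choose Fz hFz hval using hwit
    obtain ⟨BB, hBB⟩ : ∃ BB : ℝ, ∀ z j w, Fz z j w ≤ BB := by
      have h1 : ∀ z, ∃ B : ℝ, ∀ j w, Fz z j w ≤ B := fun z => (hFz z).2.1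
      choose Bz hBz using h1
      obtain ⟨BB, hBB⟩ := Finite.exists_le Bz
      exact ⟨BB, fun z j w => le_trans (hBz z j w) (hBB z)⟩
    set c0 : ℝ := T (fun z => Fz z (n+1+1) (snoc u z)) xn with hc0
    set F' : ∀ j, Sit (fun _ => X) j → ℝ := fun j w =>
      if n+1+1 ≤ j ∧ res (extend w) (n+1) = u then Fz (extend w (n+1)) j w else c0
      with hF'def
    have hF'low : ∀ (j : ℕ), j ≤ n+1 → ∀ w : Sit (fun _ => X) j, F' j w = c0 := by
      intro j hj w
      simp only [hF'def]
      rw [if_neg (fun hc => by omega : ¬ (n+1+1 ≤ j ∧ res (extend w) (n+1) = u))]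
    have hkey : ∀ (w : Sit (fun _ => X) (n+1)) (z : X),
        res (extend (snoc w z)) (n+1) = w := by
      intro w z
      rw [resext_snoc w z le_rfl, resext_self]
    have hF'sub : IsSubmartingale Q F' := by
      intro j w
      rcases lt_or_ge j (n+1) with hj | hj
      · have hzero : (fun y => F' (j+1) (snoc w y) - F' j w) = fun _ : X => (0:ℝ) := by
          funext y
          rw [hF'low (j+1) (by omega), hF'low j (by omega)]
          ring
        rw [hzero, isle_zero (hQle j w)]
      · by_cases hj2 : j = n+1
        · subst hj2
          by_cases hwu : w = u
          · subst hwu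
            have hch : ∀ y : X, F' (n+1+1) (snoc w y) = Fz y (n+1+1) (snoc w y) := by
              intro y
              simp only [hF'def]
              rw [if_pos ⟨le_rfl, (hkey w y)⟩, extend_snoc_last]
            have hgam : (fun y => F' (n+1+1) (snoc w y) - F' (n+1) w)
                = (fun y => Fz y (n+1+1) (snoc w y) - c0) := by
              funext y
              rw [hch y, hF'low (n+1) le_rfl w]
            rw [hgam, hQu]
            have hsc := isle_sub_const (hT xn)
              (fun z => Fz z (n+1+1) (snoc w z)) c0
            rw [hsc, ← hc0]
            simp
          · have hzero : (fun y => F' (n+1+1) (snoc w y) - F' (n+1) w)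
                = fun _ : X => (0:ℝ) := by
              funext y
              have h1 : F' (n+1+1) (snoc w y) = c0 := by
                simp only [hF'def]
                rw [if_neg (fun hc => hwu (by rw [← hkey w y]; exact hc.2))]
              rw [h1, hF'low (n+1) le_rfl w]
              ring
            rw [hzero, isle_zero (hQle (n+1) w)]
        · have hj3 : n+1+1 ≤ j := by omega
          by_cases hC : res (extend w) (n+1) = u
          · have hval1 : F' j w = Fz (extend w (n+1)) j w := by
              simp only [hF'def]
              rw [if_pos ⟨hj3, hC⟩]
            have hvalc : ∀ y, F' (j+1) (snoc w y) = Fz (extend w (n+1)) (j+1) (snoc w y) := by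
              intro y
              have h1 : res (extend (snoc w y)) (n+1) = u := by
                rw [resext_snoc w y (by omega)]
                exact hC
              have h2 : extend (snoc w y) (n+1) = extend w (n+1) := by
                rw [extend_coord _ _ (by omega : n+1 < j+1),
                  extend_coord _ _ (by omega : n+1 < j),
                  snoc_lt _ _ _ (by omega : n+1 < j)]
              simp only [hF'def]
              rw [if_pos ⟨by omega, h1⟩, h2]
            have hgam : (fun y => F' (j+1) (snoc w y) - F' j w)
                = (fun y => Fz (extend w (n+1)) (j+1) (snoc w y)
                    - Fz (extend w (n+1)) j w) := by
              funext y
              rw [hvalc y, hval1]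
            rw [hgam]
            exact (hFz (extend w (n+1))).1 j w
          · have hzero : (fun y => F' (j+1) (snoc w y) - F' j w) = fun _ : X => (0:ℝ) := by
              funext y
              have h1 : F' (j+1) (snoc w y) = c0 := by
                simp only [hF'def]
                refine if_neg (fun hc => hC ?_)
                rw [← resext_snoc w y (by omega : n+1 ≤ j)]
                exact hc.2
              have h2 : F' j w = c0 := by
                simp only [hF'def]
                exact if_neg (fun hc => hC hc.2)
              rw [h1, h2]
              ring
            rw [hzero, isle_zero (hQle j w)]
    have hF'bdd : BddAbv F' := by
      refine ⟨max BB c0, fun j w => ?_⟩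
      simp only [hF'def]
      by_cases hC : n+1+1 ≤ j ∧ res (extend w) (n+1) = u
      · rw [if_pos hC]; exact le_max_of_le_left (hBB _ _ _)
      · rw [if_neg hC]; exact le_max_right _ _
    have hF'lim : ∀ ω : Path (fun _ => X), res ω (n+1) = u → pathLimsup F' ω ≤ g ω := by
      intro ω hω
      set z := ω (n+1) with hz
      have hres2 : res ω (n+1+1) = snoc u z := by
        funext i
        show ω (i:ℕ) = snoc u z i
        by_cases hi : (i:ℕ) < n+1
        · rw [snoc_lt _ _ _ hi]
          exact (congrFun hω ⟨(i:ℕ), hi⟩ : ω (i:ℕ) = u ⟨(i:ℕ), hi⟩)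
        · rw [snoc_last' _ _ _ hi]
          have h3 : (i:ℕ) = n+1 := by omega
          rw [h3]
      have heq : ∀ j, n+1+1 ≤ j → F' j (res ω j) = Fz z j (res ω j) := by
        intro j hj
        have h1 : res (extend (res ω j)) (n+1) = u := by
          rw [resext_res ω (by omega : n+1 ≤ j)]
          exact hω
        have h2 : extend (res ω j) (n+1) = z := by
          rw [extend_coord _ _ (by omega : n+1 < j)]
          rfl
        simp only [hF'def]
        rw [if_pos ⟨hj, h1⟩, h2]
      have hlimeq : pathLimsup F' ω = pathLimsup (Fz z) ω := by
        unfold pathLimsup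
        apply Filter.limsup_congr
        filter_upwards [eventually_ge_atTop (n+1+1)] with j hj
        rw [heq j hj]
      rw [hlimeq]
      exact (hFz z).2.2 ω hres2
    have hle : ((c0:ℝ):EReal) ≤ lexp Q u g := by
      refine le_sSup ⟨F', ⟨hF'sub, hF'bdd, hF'lim⟩, ?_⟩
      show ((F' (n+1) u : ℝ) : EReal) = _
      rw [hF'low (n+1) le_rfl u]
    have hd : d ≤ c0 := by
      have hmono : T (fun z => h' z - ε) xn ≤ c0 := by
        rw [hc0]
        exact isle_mono (hT xn) (fun z => le_of_lt (hval z))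
      have hsc := isle_sub_const (hT xn) h' ε
      have hεd : ε = T h' xn - d := hεdef
      linarith
    have hdle : ((d:ℝ):EReal) ≤ lexp Q u g :=
      le_trans (by exact_mod_cast hd) hle
    exact absurd hd1 (not_lt.mpr hdle)

theorem snoc_top {X : Type} {n : ℕ} (w : Sit (fun _ => X) n) (y : X) :
    snoc w y ⟨n, Nat.lt_succ_self n⟩ = y :=
  snoc_last' w y ⟨n, Nat.lt_succ_self n⟩ (by simp)

theorem main_aux {X : Type} [Fintype X] [Nonempty X]
    (E1 : (X → ℝ) → ℝ) (T : (X → ℝ) → X → ℝ)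
    (hE1 : IsLE E1) (hT : ∀ x : X, IsLE (fun h => T h x)) (m : ℕ) :
    ∀ (k : ℕ) (g : Path (fun _ => X) → EReal),
      (∀ (s t : Sit (fun _ => X) (m + k)) (ω : ℕ → X),
        g (prependX s ω) = g (prependX t ω)) →
      ∀ (x : X) (s : Sit (fun _ => X) m) (t : Sit (fun _ => X) (m + k)),
      lexp (markovQ E1 (fun x h => T h x)) (snoc s x) g
        = (Text T)^[k] (fun y => lexp (markovQ E1 (fun x h => T h x)) (snoc t y) g) x := by
  intro k
  induction k with
  | zero =>
    intro g hg x s t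
    rw [Function.iterate_zero_apply]
    apply le_antisymm
    · exact lexp_transplant E1 T hE1 hT (snoc s x) (snoc t x)
        ((snoc_top s x).trans (snoc_top t x).symm) g
        (fun ω => by rw [prependX_snoc s x ω, prependX_snoc t x ω]; exact hg s t (consP x ω))
    · exact lexp_transplant E1 T hE1 hT (snoc t x) (snoc s x)
        ((snoc_top t x).trans (snoc_top s x).symm) g
        (fun ω => by rw [prependX_snoc t x ω, prependX_snoc s x ω]; exact hg t s (consP x ω))
  | succ k ih =>
    intro g hg x s t
    have hg' : ∀ (s' t' : Sit (fun _ => X) (m + k)) (ω : ℕ → X),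
        g (prependX s' ω) = g (prependX t' ω) := by
      intro s' t' ω
      rw [prependX_eq_snoc_tail s' ω, prependX_eq_snoc_tail t' ω]
      exact hg (snoc s' (ω 0)) (snoc t' (ω 0)) _
    set t' : Sit (fun _ => X) (m+k) := trunc t (m+k) (by omega) with ht'
    have hstep : ∀ y : X,
        lexp (markovQ E1 (fun x h => T h x)) (snoc t' y) g
          = Text T (fun z => lexp (markovQ E1 (fun x h => T h x)) (snoc t z) g) y := by
      intro y
      have h1 := lexp_step E1 T hE1 hT (snoc t' y) g
      rw [snoc_top t' y] at h1
      have hAB : (fun z => lexp (markovQ E1 (fun x h => T h x)) (snoc (snoc t' y) z) g)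
          = fun z => lexp (markovQ E1 (fun x h => T h x)) (snoc t z) g := by
        funext z
        apply le_antisymm
        · exact lexp_transplant E1 T hE1 hT (snoc (snoc t' y) z) (snoc t z)
            ((snoc_top (snoc t' y) z).trans (snoc_top t z).symm) g
            (fun ω => by
              rw [prependX_snoc (snoc t' y) z ω, prependX_snoc t z ω]
              exact hg (snoc t' y) t (consP z ω))
        · exact lexp_transplant E1 T hE1 hT (snoc t z) (snoc (snoc t' y) z)
            ((snoc_top t z).trans (snoc_top (snoc t' y) z).symm) g
            (fun ω => by
              rw [prependX_snoc t z ω, prependX_snoc (snoc t' y) z ω]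
              exact hg t (snoc t' y) (consP z ω))
      rw [hAB] at h1
      exact h1
    calc lexp (markovQ E1 (fun x h => T h x)) (snoc s x) g
        = (Text T)^[k] (fun y => lexp (markovQ E1 (fun x h => T h x)) (snoc t' y) g) x :=
          ih g hg' x s t'
      _ = (Text T)^[k]
            (Text T (fun z => lexp (markovQ E1 (fun x h => T h x)) (snoc t z) g)) x := by
          rw [funext hstep]
      _ = (Text T)^[k+1]
            (fun z => lexp (markovQ E1 (fun x h => T h x)) (snoc t z) g) x := by
          rw [← Function.iterate_succ_apply]

end Aux

/-- Iterated lower expectations in an imprecise Markov chain, via the lower transition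
operator. -/
theorem lile_transition {X : Type} [Fintype X] [Nonempty X]
    (E1 : (X → ℝ) → ℝ) (T : (X → ℝ) → X → ℝ)
    (hE1 : IsLE E1) (hT : ∀ x : X, IsLE (fun h => T h x))
    (m k : ℕ) (g : Path (fun _ => X) → EReal)
    (hg : ∀ (s t : Sit (fun _ => X) (m + k)) (ω : ℕ → X),
      g (prependX s ω) = g (prependX t ω))
    (x : X) (s : Sit (fun _ => X) m) (t : Sit (fun _ => X) (m + k)) :
    lexp (markovQ E1 (fun x h => T h x)) (snoc s x) g
      = (Text T)^[k] (fun y => lexp (markovQ E1 (fun x h => T h x)) (snoc t y) g) x := by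
  exact Aux.main_aux E1 T hE1 hT m k g hg x s t

end IP
end
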